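/- Let ρ be a d×d complex positive semidefinite matrix with trace 1 and let A_1, …, A_N (N ≥ 2) be d×d Hermitian matrices. Then for each x ∈ {0, 1}: ∑_{i=1}^N Δ²_ρ(A_i) ≥ (1/(2N − 2)) · [ (2/(N(N − 1))) · (∑_{1 ≤ i < j ≤ N} Δ_ρ(A_i + (−1)^x A_j))² + ∑_{1 ≤ i < j ≤ N} Δ²_ρ(A_i + (−1)^{x+1} A_j) ]. -/

import Mathlib

/-! For `s = ±1` the variance obeys the parallelogram law
`Δ²(X + sY) + Δ²(X − sY) = 2Δ²(X) + 2Δ²(Y)`; summed over the `N(N−1)/2` pairs `i < j` it gives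
`∑ Δ²(A_i + sA_j) + ∑ Δ²(A_i − sA_j) = (2N − 2) ∑ Δ²(A_i)`. Cauchy–Schwarz bounds the first sum
below by `(2/(N(N−1))) (∑ Δ(A_i + sA_j))²`; this needs `Δ(B)² = Δ²(B)`, that is,
`Δ²_ρ(B) = Tr(ρ (B − Tr(ρB))²) ≥ 0` for Hermitian `B`. -/
open Matrix Finset
open scoped ComplexOrder

/-- The variance `Δ²_ρ(A) = Tr(ρ A²) − (Tr(ρ A))²` (a real number). -/
noncomputable def matVar {d : ℕ} (ρ A : Matrix (Fin d) (Fin d) ℂ) : ℝ :=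
  ((ρ * (A * A)).trace - ((ρ * A).trace) ^ 2).re

/-- The standard deviation `Δ_ρ(A) = √(Δ²_ρ(A))`. -/
noncomputable def matDev {d : ℕ} (ρ A : Matrix (Fin d) (Fin d) ℂ) : ℝ :=
  Real.sqrt (matVar ρ A)

namespace Finset

theorem sum_filter_fst_lt_snd_add {ι M : Type*} [Fintype ι] [LinearOrder ι] [AddCommMonoid M]
    (f : ι → M) :
    ∑ p ∈ univ.filter (fun p : ι × ι => p.1 < p.2), (f p.1 + f p.2) =
      (Fintype.card ι - 1) • ∑ i, f i := by
  have swap : ∑ p ∈ univ.filter (fun p : ι × ι => p.1 < p.2), f p.2 =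
      ∑ p ∈ univ.filter (fun p : ι × ι => p.2 < p.1), f p.1 :=
    sum_equiv (Equiv.prodComm ι ι) (by simp) (by simp)
  rw [sum_add_distrib, swap, ← sum_union (disjoint_filter.2 fun p _ h => h.asymm), ← filter_or]
  simp_rw [← ne_iff_lt_or_gt]
  rw [sum_filter, Fintype.sum_prod_type, smul_sum]
  refine sum_congr rfl fun i _ => ?_
  simp only [← sum_filter, sum_const, filter_ne, card_erase_of_mem (mem_univ i), card_univ]

end Finset

namespace Matrix

theorem isSelfAdjoint_trace_mul {n α : Type*} [Fintype n] [CommRing α] [StarRing α]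
    {ρ B : Matrix n n α} (hρ : ρ.IsHermitian) (hB : B.IsHermitian) :
    IsSelfAdjoint (ρ * B).trace := by
  rw [IsSelfAdjoint, ← trace_conjTranspose, conjTranspose_mul, hB.eq, hρ.eq, trace_mul_comm]

end Matrix

section Variance

variable {d : ℕ} {ρ : Matrix (Fin d) (Fin d) ℂ}

theorem matVar_eq_re_trace_sq_sub (hTr : ρ.trace = 1) (B : Matrix (Fin d) (Fin d) ℂ) :
    matVar ρ B = (ρ * ((B - (ρ * B).trace • 1) * (B - (ρ * B).trace • 1))).trace.re := by
  rw [matVar]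
  congr 1
  simp only [Matrix.mul_sub, Matrix.sub_mul, Matrix.smul_mul, Matrix.mul_smul, Matrix.mul_one,
    Matrix.one_mul, trace_sub, trace_smul, smul_eq_mul, hTr]
  ring

theorem matVar_nonneg (hρ : ρ.PosSemidef) (hTr : ρ.trace = 1) {B : Matrix (Fin d) (Fin d) ℂ}
    (hB : B.IsHermitian) : 0 ≤ matVar ρ B := by
  set C := B - (ρ * B).trace • 1
  have hC : Cᴴ = C :=
    (hB.sub (isHermitian_one.smul (isSelfAdjoint_trace_mul hρ.isHermitian hB))).eq
  have h : (ρ * (C * C)).trace = (C * ρ * Cᴴ).trace := by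
    rw [hC, trace_mul_cycle, trace_mul_comm]
  rw [matVar_eq_re_trace_sq_sub hTr, h]
  exact (Complex.nonneg_iff.1 (hρ.mul_mul_conjTranspose_same C).trace_nonneg).1

theorem matDev_sq (hρ : ρ.PosSemidef) (hTr : ρ.trace = 1) {B : Matrix (Fin d) (Fin d) ℂ}
    (hB : B.IsHermitian) : matDev ρ B ^ 2 = matVar ρ B :=
  Real.sq_sqrt (matVar_nonneg hρ hTr hB)

theorem matVar_add_add_matVar_sub (ρ X Y : Matrix (Fin d) (Fin d) ℂ) :
    matVar ρ (X + Y) + matVar ρ (X - Y) = 2 * matVar ρ X + 2 * matVar ρ Y := by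
  simp only [matVar, two_mul, ← Complex.add_re]
  congr 1
  simp only [Matrix.mul_add, Matrix.add_mul, Matrix.mul_sub, Matrix.sub_mul, trace_add, trace_sub]
  ring

theorem matVar_smul_of_sq_eq_one (ρ B : Matrix (Fin d) (Fin d) ℂ) {s : ℂ} (hs : s ^ 2 = 1) :
    matVar ρ (s • B) = matVar ρ B := by
  simp only [matVar, Matrix.smul_mul, Matrix.mul_smul, smul_smul, trace_smul, smul_eq_mul,
    mul_pow, ← sq s, hs, one_mul]

theorem sq_sum_matDev_le_card_mul_sum_matVar {κ : Type*} (hρ : ρ.PosSemidef) (hTr : ρ.trace = 1)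
    (t : Finset κ) {B : κ → Matrix (Fin d) (Fin d) ℂ} (hB : ∀ k ∈ t, (B k).IsHermitian) :
    (∑ k ∈ t, matDev ρ (B k)) ^ 2 ≤ #t * ∑ k ∈ t, matVar ρ (B k) :=
  calc (∑ k ∈ t, matDev ρ (B k)) ^ 2 ≤ #t * ∑ k ∈ t, matDev ρ (B k) ^ 2 :=
        sq_sum_le_card_mul_sum_sq
    _ = #t * ∑ k ∈ t, matVar ρ (B k) := by
        rw [sum_congr rfl fun k hk => matDev_sq hρ hTr (hB k hk)]

variable {ι : Type*} [Fintype ι] [LinearOrder ι]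

theorem sum_pairs_matVar_add_add_matVar_sub [Nonempty ι] (A : ι → Matrix (Fin d) (Fin d) ℂ)
    {s : ℂ} (hs : s ^ 2 = 1) :
    ∑ p ∈ univ.filter (fun p : ι × ι => p.1 < p.2),
        (matVar ρ (A p.1 + s • A p.2) + matVar ρ (A p.1 + (-s) • A p.2)) =
      2 * ((Fintype.card ι : ℝ) - 1) * ∑ i, matVar ρ (A i) := by
  have h (i j : ι) : matVar ρ (A i + s • A j) + matVar ρ (A i + (-s) • A j) =
      2 * (matVar ρ (A i) + matVar ρ (A j)) := by
    rw [neg_smul, ← sub_eq_add_neg, matVar_add_add_matVar_sub, matVar_smul_of_sq_eq_one _ _ hs,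
      mul_add]
  rw [sum_congr rfl fun p _ => h p.1 p.2, ← mul_sum,
    sum_filter_fst_lt_snd_add fun i => matVar ρ (A i), nsmul_eq_mul, Nat.cast_pred Fintype.card_pos]
  ring

theorem sum_matVar_ge_of_sq_eq_one (hι : 2 ≤ Fintype.card ι) (hρ : ρ.PosSemidef)
    (hTr : ρ.trace = 1) (A : ι → Matrix (Fin d) (Fin d) ℂ) (hA : ∀ i, (A i).IsHermitian)
    {s : ℂ} (hs : s ^ 2 = 1) (hs_sa : IsSelfAdjoint s) :
    ∑ i, matVar ρ (A i) ≥
      (1 / (2 * (Fintype.card ι : ℝ) - 2)) *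
        ((2 / ((Fintype.card ι : ℝ) * ((Fintype.card ι : ℝ) - 1))) *
            (∑ p ∈ univ.filter (fun p : ι × ι => p.1 < p.2), matDev ρ (A p.1 + s • A p.2)) ^ 2 +
          ∑ p ∈ univ.filter (fun p : ι × ι => p.1 < p.2), matVar ρ (A p.1 + (-s) • A p.2)) := by
  have : Nonempty ι := Fintype.card_pos_iff.1 (by omega)
  have hn : (2 : ℝ) ≤ Fintype.card ι := by exact_mod_cast hι
  have hcard : (#(univ.filter (fun p : ι × ι => p.1 < p.2)) : ℝ) =
      Fintype.card ι * (Fintype.card ι - 1) / 2 := by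
    rw [← univ_product_univ, card_product_filter_lt, Nat.cast_choose_two, card_univ]
  set n : ℝ := (Fintype.card ι : ℝ)
  set P := univ.filter (fun p : ι × ι => p.1 < p.2)
  have hCS := sq_sum_matDev_le_card_mul_sum_matVar hρ hTr P
    (fun p _ => (hA p.1).add ((hA p.2).smul hs_sa))
  rw [hcard] at hCS
  have hpar := sum_pairs_matVar_add_add_matVar_sub (ρ := ρ) A hs
  rw [sum_add_distrib] at hpar
  have hS : 2 / (n * (n - 1)) * (∑ p ∈ P, matDev ρ (A p.1 + s • A p.2)) ^ 2 ≤
      ∑ p ∈ P, matVar ρ (A p.1 + s • A p.2) := by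
    rw [div_mul_eq_mul_div, div_le_iff₀ (by nlinarith)]
    linarith
  rw [ge_iff_le, one_div_mul_eq_div, div_le_iff₀ (by linarith)]
  linarith

end Variance

theorem variance_uncertainty (d N : ℕ) (hN : 2 ≤ N)
    (ρ : Matrix (Fin d) (Fin d) ℂ) (hρ : ρ.PosSemidef) (hTr : ρ.trace = 1)
    (A : Fin N → Matrix (Fin d) (Fin d) ℂ) (hA : ∀ i, (A i).IsHermitian) :
    ∀ x ∈ ({0, 1} : Set ℕ),
      ∑ i, matVar ρ (A i) ≥
        (1 / (2 * (N : ℝ) - 2)) *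
          ((2 / ((N : ℝ) * ((N : ℝ) - 1))) *
              (∑ p ∈ univ.filter (fun p : Fin N × Fin N => p.1 < p.2),
                matDev ρ (A p.1 + ((-1 : ℂ) ^ x) • A p.2)) ^ 2 +
            ∑ p ∈ univ.filter (fun p : Fin N × Fin N => p.1 < p.2),
              matVar ρ (A p.1 + ((-1 : ℂ) ^ (x + 1)) • A p.2)) := by
  intro x _
  have hs : ((-1 : ℂ) ^ x) ^ 2 = 1 := by rw [← pow_mul, mul_comm, pow_mul, neg_one_sq, one_pow]
  have hs_sa : IsSelfAdjoint ((-1 : ℂ) ^ x) := (IsSelfAdjoint.one ℂ).neg.pow x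
  simpa [pow_succ] using
    sum_matVar_ge_of_sq_eq_one (by simpa using hN) hρ hTr A hA hs hs_sa
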